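/- arXiv:1701.01671 — 2 statements merged into one kernel-verified Lean document; each statement's English description precedes it below -/
import Mathlib

section
/- Let $g : \mathbb{C} \to X$ ($X$ a complex Banach space) be holomorphic on an open set containing the closed Bernstein region $\overline{E_\rho} = \{(z + z^{-1})/2 : 1 \leq |z| \leq \rho\}$ for some $\rho > 1$, with $\sup_{w \in E_\rho} \|g(w)\|_X \leq M$. Then for every $n \geq 1$, the $n$-th Chebyshev coefficient $g_n := \int_{-1}^{1} g(t) T_n(t) \frac{dt}{\pi\sqrt{1-t^2}}$ satisfies $\|g_n\|_X \leq \sqrt{2}\, M \rho^{-n}$. -/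
/-!
Substituting `t = cos φ` turns the coefficient into `(√2/π) ∫₀^π cos (n φ) g (cos φ) dφ`, which
by the symmetry `φ ↦ 2π - φ` is half the integral over `[0, 2π]`. With `z = e^{iφ}` and
`h z = g ((z + z⁻¹) / 2)` the latter is `(2i)⁻¹ ∮_{|z|=1} (z^{n-1} + z^{-n-1}) h z dz`.
Since `h` is holomorphic on the closed annulus `ρ⁻¹ ≤ |z| ≤ ρ`, Cauchy's theorem moves the
contour of the first term to `|z| = ρ⁻¹` and that of the second to `|z| = ρ`, where each is at
most `2π M ρ^{-n}`.
-/

open MeasureTheory Set intervalIntegral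
open scoped Real

noncomputable section

def joukowski (z : ℂ) : ℂ := (z + z⁻¹) / 2

def bernsteinRegion (ρ : ℝ) : Set ℂ :=
  {w | ∃ z : ℂ, 1 ≤ ‖z‖ ∧ ‖z‖ ≤ ρ ∧ w = joukowski z}

lemma joukowski_inv (z : ℂ) : joukowski z⁻¹ = joukowski z := by
  rw [joukowski, joukowski, inv_inv, add_comm]

lemma joukowski_mem_bernsteinRegion {ρ : ℝ} (hρ : 0 < ρ) {z : ℂ} (hz : ‖z‖ ∈ Icc ρ⁻¹ ρ) :
    joukowski z ∈ bernsteinRegion ρ := by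
  obtain ⟨h1, h2⟩ := hz
  have hz0 : 0 < ‖z‖ := (inv_pos.mpr hρ).trans_le h1
  rcases le_total 1 ‖z‖ with h | h
  · exact ⟨z, h, h2, rfl⟩
  · refine ⟨z⁻¹, ?_, ?_, (joukowski_inv z).symm⟩
    · rwa [norm_inv, one_le_inv₀ hz0]
    · rwa [norm_inv, inv_le_comm₀ hz0 hρ]

lemma differentiableAt_joukowski {z : ℂ} (hz : z ≠ 0) : DifferentiableAt ℂ joukowski z :=
  ((differentiableAt_id.add (differentiableAt_inv hz)).div_const 2)

lemma joukowski_exp_mul_I (θ : ℝ) :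
    joukowski (Complex.exp (θ * Complex.I)) = Real.cos θ := by
  rw [joukowski, ← Complex.exp_neg, Complex.ofReal_cos, Complex.cos, neg_mul]

lemma integral_Ioo_div_sqrt_one_sub_sq_smul {F : Type*} [NormedAddCommGroup F]
    [NormedSpace ℝ F] (w : ℝ → ℝ) (f : ℝ → F) :
    ∫ t in Ioo (-1 : ℝ) 1, (w (Real.arccos t) / √(1 - t ^ 2)) • f t =
      ∫ φ in 0..π, w φ • f (Real.cos φ) := by
  have himage : Real.cos '' Ioo 0 π = Ioo (-1) 1 :=
    Real.cosPartialHomeomorph.image_source_eq_target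
  rw [← himage, integral_image_eq_integral_abs_deriv_smul measurableSet_Ioo
    (fun φ _ => (Real.hasDerivAt_cos φ).hasDerivWithinAt)
    (Real.injOn_cos.mono Ioo_subset_Icc_self), integral_of_le Real.pi_pos.le,
    integral_Ioc_eq_integral_Ioo]
  refine setIntegral_congr_fun measurableSet_Ioo fun φ hφ => ?_
  have hsin : 0 < Real.sin φ := Real.sin_pos_of_pos_of_lt_pi hφ.1 hφ.2
  have hsqrt : √(1 - Real.cos φ ^ 2) = Real.sin φ := by
    rw [← Real.sin_sq, Real.sqrt_sq hsin.le]
  rw [abs_neg, abs_of_pos hsin, Real.arccos_cos hφ.1.le hφ.2.le, hsqrt, smul_smul,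
    mul_div_cancel₀ _ hsin.ne']

lemma integral_zero_two_mul_eq_two_smul_of_symm {F : Type*} [NormedAddCommGroup F]
    [NormedSpace ℝ F] {f : ℝ → F} (hf : Continuous f) {a : ℝ}
    (hsymm : ∀ x, f (2 * a - x) = f x) :
    ∫ x in 0..2 * a, f x = (2 : ℝ) • ∫ x in 0..a, f x := by
  have hreflect : ∫ x in a..2 * a, f x = ∫ x in 0..a, f x := by
    have := integral_comp_sub_left (a := 0) (b := a) f (2 * a)
    simp only [hsymm, sub_zero, show 2 * a - a = a by ring] at this
    exact this.symm
  rw [← integral_add_adjacent_intervals (hf.intervalIntegrable 0 a)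
    (hf.intervalIntegrable a (2 * a)), hreflect, two_smul]

lemma exp_mul_I_mul_zpow_add_zpow (θ : ℝ) (n : ℤ) :
    Complex.exp (θ * Complex.I) * (Complex.exp (θ * Complex.I) ^ (n - 1) +
      Complex.exp (θ * Complex.I) ^ (-n - 1)) = 2 * Real.cos (n * θ) := by
  set w := Complex.exp (θ * Complex.I)
  have hw : w ≠ 0 := Complex.exp_ne_zero _
  have hpow : w ^ n = Complex.exp ((n * θ : ℝ) * Complex.I) := by
    rw [← Complex.exp_int_mul]; push_cast; ring_nf
  rw [zpow_sub_one₀ hw, zpow_sub_one₀ hw, zpow_neg, Complex.ofReal_cos, Complex.two_cos,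
    ← hpow, neg_mul, Complex.exp_neg, ← hpow]
  field_simp

variable {X : Type*} [NormedAddCommGroup X] [NormedSpace ℂ X]

lemma circleIntegral_zpow_add_zpow_smul_comp_joukowski (G : ℂ → X) (n : ℤ) :
    ∮ z in C(0, 1), (z ^ (n - 1) + z ^ (-n - 1)) • G (joukowski z) =
      (2 * Complex.I) • ∫ θ in 0..2 * π, Real.cos (n * θ) • G (Real.cos θ) := by
  rw [circleIntegral, ← intervalIntegral.integral_smul]
  congr 1 with θ
  have hcirc : circleMap 0 1 θ = Complex.exp (θ * Complex.I) := by simp [circleMap]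
  rw [deriv_circleMap, hcirc, joukowski_exp_mul_I, smul_smul, mul_assoc,
    mul_comm Complex.I, ← mul_assoc, exp_mul_I_mul_zpow_add_zpow, ← Complex.coe_smul,
    smul_smul]
  ring_nf

lemma circleIntegral_eq_of_differentiableAt_annulus {f : ℂ → X} {r R : ℝ} (hr : 0 < r)
    (hR : 0 < R) (hf : ∀ z : ℂ, ‖z‖ ∈ uIcc r R → DifferentiableAt ℂ f z) :
    ∮ z in C(0, r), f z = ∮ z in C(0, R), f z := by
  wlog hrR : r ≤ R generalizing r R
  · exact (this hR hr (by rwa [uIcc_comm]) (le_of_not_ge hrR)).symm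
  rw [uIcc_of_le hrR] at hf
  refine (Complex.circleIntegral_eq_of_differentiable_on_annulus_off_countable hr hrR
    countable_empty (fun z hz => ?_) fun z hz => ?_).symm
  · have hz' : ‖z‖ ∈ Icc r R := ⟨by simpa using hz.2, by simpa using hz.1⟩
    exact (hf z hz').continuousAt.continuousWithinAt
  · obtain ⟨⟨hzR, hzr⟩, -⟩ := hz
    exact hf z ⟨(by simpa using hzr : r < ‖z‖).le, (by simpa using hzR : ‖z‖ < R).le⟩

lemma norm_circleIntegral_zpow_smul_le {h : ℂ → X} {R M : ℝ} (hR : 0 < R) (k : ℤ)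
    (hdiff : ∀ z : ℂ, ‖z‖ ∈ uIcc 1 R → DifferentiableAt ℂ h z)
    (hM : ∀ z : ℂ, ‖z‖ = R → ‖h z‖ ≤ M) :
    ‖∮ z in C(0, 1), z ^ k • h z‖ ≤ 2 * π * R ^ (k + 1) * M := by
  have hne : ∀ z : ℂ, ‖z‖ ∈ uIcc 1 R → z ≠ 0 := fun z hz => by
    rw [← norm_pos_iff]; exact (lt_min one_pos hR).trans_le hz.1
  rw [circleIntegral_eq_of_differentiableAt_annulus (f := fun z => z ^ k • h z) one_pos hR
    fun z hz => (differentiableAt_zpow.mpr (Or.inl (hne z hz))).smul (hdiff z hz)]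
  calc _ ≤ 2 * π * R * (R ^ k * M) :=
        circleIntegral.norm_integral_le_of_norm_le_const hR.le fun z hz => by
          rw [mem_sphere_zero_iff_norm] at hz
          rw [norm_smul, norm_zpow, hz]
          exact mul_le_mul_of_nonneg_left (hM z hz) (zpow_nonneg hR.le k)
    _ = _ := by rw [zpow_add_one₀ hR.ne']; ring

lemma circleIntegral_zpow_smul_add_circleIntegral_zpow_smul (G : ℂ → X) (n : ℤ)
    (hG : ContinuousOn (fun z => G (joukowski z)) (Metric.sphere 0 1)) :
    (∮ z in C(0, 1), z ^ (n - 1) • G (joukowski z)) +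
        ∮ z in C(0, 1), z ^ (-n - 1) • G (joukowski z) =
      (4 * Complex.I) • ∫ θ in 0..π, Real.cos (n * θ) • G (Real.cos θ) := by
  have hcont : Continuous fun θ : ℝ => Real.cos (n * θ) • G (Real.cos θ) := by
    refine (Real.continuous_cos.comp (continuous_const.mul continuous_id)).smul ?_
    simp only [← joukowski_exp_mul_I]
    exact hG.comp_continuous (by fun_prop) fun θ => by simp [Complex.norm_exp]
  have hsymm : ∀ θ, Real.cos (n * (2 * π - θ)) • G (Real.cos (2 * π - θ)) =
      Real.cos (n * θ) • G (Real.cos θ) := fun θ => by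
    rw [Real.cos_two_pi_sub, mul_sub, Real.cos_int_mul_two_pi_sub]
  have hintegrable : ∀ k : ℤ, CircleIntegrable (fun z => z ^ k • G (joukowski z)) 0 1 :=
    fun k => (((continuousOn_zpow₀ k).mono fun z hz =>
      mem_compl_singleton_iff.mpr (ne_zero_of_mem_unit_sphere ⟨z, hz⟩)).smul
      hG).circleIntegrable zero_le_one
  rw [← circleIntegral.integral_add (hintegrable _) (hintegrable _)]
  simp only [← add_smul]
  rw [circleIntegral_zpow_add_zpow_smul_comp_joukowski,
    integral_zero_two_mul_eq_two_smul_of_symm hcont hsymm, ← Complex.coe_smul, smul_smul]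
  congr 1
  push_cast
  ring

lemma norm_integral_cos_mul_smul_comp_cos_le (G : ℂ → X) {ρ M : ℝ} (hρ : 1 < ρ) (n : ℤ)
    (hdiff : ∀ z : ℂ, ‖z‖ ∈ Icc ρ⁻¹ ρ → DifferentiableAt ℂ (fun z => G (joukowski z)) z)
    (hM : ∀ z : ℂ, ‖z‖ ∈ Icc ρ⁻¹ ρ → ‖G (joukowski z)‖ ≤ M) :
    ‖∫ θ in 0..π, Real.cos (n * θ) • G (Real.cos θ)‖ ≤ π * M * ρ ^ (-n) := by
  have hρ0 : 0 < ρ := one_pos.trans hρ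
  have hρinv : ρ⁻¹ ≤ 1 := inv_le_one_of_one_le₀ hρ.le
  have hinner : uIcc 1 ρ⁻¹ ⊆ Icc ρ⁻¹ ρ := by
    rw [uIcc_of_ge hρinv]; exact Icc_subset_Icc le_rfl hρ.le
  have houter : uIcc 1 ρ ⊆ Icc ρ⁻¹ ρ := by
    rw [uIcc_of_le hρ.le]; exact Icc_subset_Icc hρinv le_rfl
  have hsum := circleIntegral_zpow_smul_add_circleIntegral_zpow_smul G n fun z hz =>
    (hdiff z (hinner (by simp [mem_sphere_zero_iff_norm.mp hz]))).continuousAt.continuousWithinAt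
  have hin := norm_circleIntegral_zpow_smul_le (inv_pos.mpr hρ0) (n - 1)
    (fun z hz => hdiff z (hinner hz)) fun z hz => hM z (hinner (by simp [hz]))
  have hout := norm_circleIntegral_zpow_smul_le hρ0 (-n - 1)
    (fun z hz => hdiff z (houter hz)) fun z hz => hM z (houter (by simp [hz]))
  simp only [sub_add_cancel, inv_zpow'] at hin hout
  have hnorm := (norm_add_le _ _).trans (add_le_add hin hout)
  have h4I : ‖4 * Complex.I‖ = 4 := by simp
  rw [hsum, norm_smul, h4I] at hnorm
  linarith

end

theorem stmt5_general {X : Type*} [NormedAddCommGroup X] [NormedSpace ℂ X]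
    (g : ℂ → X) (ρ M : ℝ) (hρ : 1 < ρ)
    (U : Set ℂ) (hU : IsOpen U)
    (hE : {w : ℂ | ∃ z : ℂ, 1 ≤ ‖z‖ ∧ ‖z‖ ≤ ρ ∧ w = (z + z⁻¹) / 2} ⊆ U)
    (hg : DifferentiableOn ℂ g U)
    (hM : ∀ w ∈ {w : ℂ | ∃ z : ℂ, 1 ≤ ‖z‖ ∧ ‖z‖ ≤ ρ ∧ w = (z + z⁻¹) / 2},
      ‖g w‖ ≤ M)
    (n : ℕ) :
    ‖∫ t in Set.Ioo (-1 : ℝ) 1,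
        (Real.sqrt 2 * Real.cos (n * Real.arccos t) / (Real.pi * Real.sqrt (1 - t ^ 2))) •
          g (t : ℂ)‖ ≤ Real.sqrt 2 * M / ρ ^ n := by
  have hρ0 : 0 < ρ := one_pos.trans hρ
  have hdiff : ∀ z : ℂ, ‖z‖ ∈ Icc ρ⁻¹ ρ → DifferentiableAt ℂ (fun z => g (joukowski z)) z :=
    fun z hz => (hg.differentiableAt (hU.mem_nhds (hE (joukowski_mem_bernsteinRegion hρ0 hz)))
      ).comp z (differentiableAt_joukowski (norm_pos_iff.mp ((inv_pos.mpr hρ0).trans_le hz.1)))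
  have hbound := norm_integral_cos_mul_smul_comp_cos_le g hρ n hdiff
    fun z hz => hM _ (joukowski_mem_bernsteinRegion hρ0 hz)
  have hweight : ∀ t : ℝ, √2 * Real.cos (n * Real.arccos t) / (π * √(1 - t ^ 2)) =
      √2 / π * Real.cos (n * Real.arccos t) / √(1 - t ^ 2) := fun t => by ring
  simp only [hweight]
  rw [integral_Ioo_div_sqrt_one_sub_sq_smul (fun φ => √2 / π * Real.cos (n * φ)) (g ·)]
  simp only [mul_smul]
  rw [intervalIntegral.integral_smul, norm_smul, Real.norm_of_nonneg (by positivity)]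
  rw [Int.cast_natCast] at hbound
  calc √2 / π * _ ≤ √2 / π * (π * M * ρ ^ (-(n : ℤ))) := by gcongr
    _ = √2 * M / ρ ^ n := by rw [zpow_neg, zpow_natCast]; field_simp

/-- Decay of Chebyshev coefficients of a Banach-space-valued function holomorphic on a
neighbourhood of the closed Bernstein region of parameter `ρ > 1`. -/
theorem stmt5 {X : Type*} [NormedAddCommGroup X] [NormedSpace ℂ X] [CompleteSpace X]
    (g : ℂ → X) (ρ M : ℝ) (hρ : 1 < ρ)
    (U : Set ℂ) (hU : IsOpen U)
    (hE : {w : ℂ | ∃ z : ℂ, 1 ≤ ‖z‖ ∧ ‖z‖ ≤ ρ ∧ w = (z + z⁻¹) / 2} ⊆ U)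
    (hg : DifferentiableOn ℂ g U)
    (hM : ∀ w ∈ {w : ℂ | ∃ z : ℂ, 1 ≤ ‖z‖ ∧ ‖z‖ ≤ ρ ∧ w = (z + z⁻¹) / 2},
      ‖g w‖ ≤ M)
    (n : ℕ) (hn : 1 ≤ n) :
    ‖∫ t in Set.Ioo (-1 : ℝ) 1,
        (Real.sqrt 2 * Real.cos (n * Real.arccos t) / (Real.pi * Real.sqrt (1 - t ^ 2))) •
          g (t : ℂ)‖ ≤ Real.sqrt 2 * M / ρ ^ n :=
  stmt5_general g ρ M hρ U hU hE hg hM n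
end

section
/- Let $0 < p < 1$, $t, t' \geq 0$ with $t + t' > 0$, $h_l = 2^{-l}h_0$, and suppose for each level $l = 1, \ldots, L$ the $L^2$ error bound $\|\Delta F^l - \widehat{\Delta F^l}\|_2 \leq C s_l^{1/2 - 1/p} h_l^{t+t'} M$ holds with $s_l = 2^{(L-l)(t+t')p/(1-p)}$, together with $\|F - F^L\|_2 \leq C h_L^{t+t'} M$. Then $\|F - F^L_{\mathrm{MLCS}}\|_2 \leq C' M h_L^{t+t'}$ with a constant $C'$ depending only on $C$, $p$, and $t+t'$ (but not on $L$). -/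
/-!
Write `τ = t + t'`. The sparsity factor `s_l^{1/2-1/p} = 2^{-(L-l)τ(2-p)/(2(1-p))}` more than
compensates the factor `2^{(L-l)τ}` lost by the coarser mesh `h_l`, so the level-`l` bound
`s_l^{1/2-1/p} h_l^τ` equals `h_L^τ r^{L-l}` with `r = 2^{-τp/(2(1-p))} < 1`. Summing over the
levels thus costs only the geometric factor `(1 - r)⁻¹`, independent of `L`, and the triangle
inequality adds the discretisation error `‖F - F^L‖`.
-/

open Finset

theorem norm_sub_sum_le_norm_sub_sum_add_sum_norm_sub {V ι : Type*}
    [SeminormedAddCommGroup V] (s : Finset ι) (F : V) (a b : ι → V) :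
    ‖F - ∑ i ∈ s, b i‖ ≤ ‖F - ∑ i ∈ s, a i‖ + ∑ i ∈ s, ‖a i - b i‖ := by
  have hsplit : F - ∑ i ∈ s, b i = (F - ∑ i ∈ s, a i) + ∑ i ∈ s, (a i - b i) := by
    rw [sum_sub_distrib]; abel
  rw [hsplit]
  exact (norm_add_le _ _).trans (add_le_add le_rfl (norm_sum_le _ _))

theorem sum_Icc_pow_sub_le_inv_one_sub {r : ℝ} (hr0 : 0 ≤ r) (hr1 : r < 1) (L : ℕ) :
    ∑ l ∈ Icc 1 L, r ^ (L - l) ≤ (1 - r)⁻¹ := by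
  have hreindex : ∑ l ∈ Icc 1 L, r ^ (L - l) = ∑ k ∈ range L, r ^ k :=
    sum_nbij' (L - ·) (L - ·) (by intro l hl; simp only [mem_Icc, mem_range] at hl ⊢; omega)
      (by intro k hk; simp only [mem_Icc, mem_range] at hk ⊢; omega)
      (by intro l hl; simp only [mem_Icc] at hl; omega)
      (by intro k hk; simp only [mem_range] at hk; omega) (fun _ _ => rfl)
  rw [hreindex, ← tsum_geometric_of_lt_one hr0 hr1]
  exact (summable_geometric_of_lt_one hr0 hr1).sum_le_tsum _ fun k _ => pow_nonneg hr0 k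

theorem rpow_sparsity_mul_rpow_mesh_eq {p τ h0 : ℝ} (hp0 : p ≠ 0) (hp1 : p ≠ 1) (hh0 : 0 ≤ h0)
    {l L : ℕ} (hlL : l ≤ L) :
    ((2 : ℝ) ^ (((L : ℝ) - l) * τ * p / (1 - p))) ^ (1 / 2 - 1 / p) *
        ((2 : ℝ) ^ (-(l : ℝ)) * h0) ^ τ
      = ((2 : ℝ) ^ (-(L : ℝ)) * h0) ^ τ * ((2 : ℝ) ^ (-(τ * p / (2 * (1 - p))))) ^ (L - l) := by
  have hcast : ((L - l : ℕ) : ℝ) = L - l := by push_cast [hlL]; ring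
  rw [← Real.rpow_natCast, hcast, Real.mul_rpow (Real.rpow_nonneg zero_le_two _) hh0,
    Real.mul_rpow (Real.rpow_nonneg zero_le_two _) hh0]
  simp only [← Real.rpow_mul zero_le_two]
  rw [← mul_assoc, ← Real.rpow_add two_pos, mul_right_comm _ (h0 ^ τ), ← Real.rpow_add two_pos]
  congr 2
  field_simp
  ring

theorem stmt14_general {V : Type*} [NormedAddCommGroup V]
    (p t t' C M : ℝ) (hp0 : 0 < p) (hp1 : p < 1)
    (htt' : 0 < t + t') (hC : 0 ≤ C) (hM : 0 ≤ M) :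
    ∃ C' : ℝ, 0 < C' ∧
      ∀ (L : ℕ), 1 ≤ L → ∀ h0 : ℝ, 0 < h0 →
      ∀ (F : V) (ΔF hatΔF : ℕ → V),
        (∀ l ∈ Finset.Icc 1 L,
          ‖ΔF l - hatΔF l‖ ≤
            C * ((2 : ℝ) ^ (((L : ℝ) - (l : ℝ)) * (t + t') * p / (1 - p))) ^ (1 / 2 - 1 / p) *
              ((2 : ℝ) ^ (-(l : ℝ)) * h0) ^ (t + t') * M) →
        ‖F - ∑ l ∈ Finset.Icc 1 L, ΔF l‖ ≤ C * ((2 : ℝ) ^ (-(L : ℝ)) * h0) ^ (t + t') * M →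
        ‖F - ∑ l ∈ Finset.Icc 1 L, hatΔF l‖ ≤
          C' * M * ((2 : ℝ) ^ (-(L : ℝ)) * h0) ^ (t + t') := by
  set r : ℝ := (2 : ℝ) ^ (-((t + t') * p / (2 * (1 - p))))
  have hr0 : 0 ≤ r := Real.rpow_nonneg zero_le_two _
  have hr1 : r < 1 := Real.rpow_lt_one_of_one_lt_of_neg one_lt_two
    (neg_neg_of_pos (by have := sub_pos.2 hp1; positivity))
  set K : ℝ := 1 + (1 - r)⁻¹
  have hK : 0 < K := by have := sub_pos.2 hr1; positivity
  refine ⟨(C + 1) * K, by positivity, ?_⟩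
  intro L _ h0 hh0 F ΔF hatΔF hlevel hF
  set A : ℝ := ((2 : ℝ) ^ (-(L : ℝ)) * h0) ^ (t + t')
  have hA : 0 ≤ A := Real.rpow_nonneg (mul_nonneg (Real.rpow_nonneg zero_le_two _) hh0.le) _
  have hlevel' : ∀ l ∈ Icc 1 L, ‖ΔF l - hatΔF l‖ ≤ C * M * A * r ^ (L - l) := fun l hl => by
    have h := hlevel l hl
    rw [mul_assoc C, rpow_sparsity_mul_rpow_mesh_eq hp0.ne' hp1.ne hh0.le (mem_Icc.1 hl).2] at h
    linarith
  calc ‖F - ∑ l ∈ Icc 1 L, hatΔF l‖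
      ≤ C * A * M + ∑ l ∈ Icc 1 L, C * M * A * r ^ (L - l) :=
        (norm_sub_sum_le_norm_sub_sum_add_sum_norm_sub _ F ΔF hatΔF).trans
          (add_le_add hF (sum_le_sum hlevel'))
    _ = C * M * A * (1 + ∑ l ∈ Icc 1 L, r ^ (L - l)) := by rw [← mul_sum]; ring
    _ ≤ C * M * A * K := 
        mul_le_mul_of_nonneg_left (add_le_add le_rfl (sum_Icc_pow_sub_le_inv_one_sub hr0 hr1 L))
          (by positivity)
    _ = C * K * M * A := by ring
    _ ≤ (C + 1) * K * M * A := by gcongr; linarith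

/-- Multilevel `L²` error bound: with sparsities `s_l = 2^{(L-l)(t+t')p/(1-p)}` the sum
of the levelwise `L²` CS errors is geometric, giving `‖F - F^L_MLCS‖ ≤ C' M h_L^{t+t'}`
with `C'` independent of `L`. -/
theorem stmt14 {V : Type*} [NormedAddCommGroup V]
    (p t t' C M : ℝ) (hp0 : 0 < p) (hp1 : p < 1) (ht : 0 ≤ t) (ht' : 0 ≤ t')
    (htt' : 0 < t + t') (hC : 0 ≤ C) (hM : 0 ≤ M) :
    ∃ C' : ℝ, 0 < C' ∧
      ∀ (L : ℕ), 1 ≤ L → ∀ h0 : ℝ, 0 < h0 →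
      ∀ (F : V) (ΔF hatΔF : ℕ → V),
        (∀ l ∈ Finset.Icc 1 L,
          ‖ΔF l - hatΔF l‖ ≤
            C * ((2 : ℝ) ^ (((L : ℝ) - (l : ℝ)) * (t + t') * p / (1 - p))) ^ (1 / 2 - 1 / p) *
              ((2 : ℝ) ^ (-(l : ℝ)) * h0) ^ (t + t') * M) →
        ‖F - ∑ l ∈ Finset.Icc 1 L, ΔF l‖ ≤ C * ((2 : ℝ) ^ (-(L : ℝ)) * h0) ^ (t + t') * M →
        ‖F - ∑ l ∈ Finset.Icc 1 L, hatΔF l‖ ≤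
          C' * M * ((2 : ℝ) ^ (-(L : ℝ)) * h0) ^ (t + t') :=
  stmt14_general p t t' C M hp0 hp1 htt' hC hM
end
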